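/- (GYP theorem consequence for Tsallis relative entropy) Let P and R be probability measures with P ≪ R and q > 1. Then the Tsallis relative entropy I_q(P‖R) = (∫_X (dP/dR)^q dR − 1)/(q−1) equals the supremum over all finite measurable partitions {E_k}_{k=1}^m of X of (Σ_k P(E_k)^q / R(E_k)^(q-1) − 1)/(q−1). -/

import Mathlib

open MeasureTheory ENNReal Filter

/-!
By Hölder's inequality on a piece `E`, `P(E)^q / R(E)^(q-1) ≤ ∫_E (dP/dR)^q dR`, so every
partition sum is bounded by the integral. Conversely, if `s ≤ (dP/dR)^q` is simple, then
`dP/dR ≥ c^(1/q)` on the level set `E = {s = c}`, whence `c R(E) ≤ P(E)^q / R(E)^(q-1)`: the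
partition into level sets of `s` beats `∫ s dR`, and the integral is the supremum of these.
The map `a ↦ (a - 1)/(q - 1)` from `[0, ∞]` to `EReal` is monotone and continuous, so it
commutes with the supremum.
-/

/-- A finite measurable partition of `X`. -/
structure FinPartition (X : Type*) [MeasurableSpace X] where
  m : ℕ
  E : Fin m → Set X
  meas : ∀ k, MeasurableSet (E k)
  disj : Pairwise (Function.onFun Disjoint E)
  cover : ⋃ k, E k = Set.univ

namespace FinPartition

variable {X : Type*} [MeasurableSpace X]

def ofFintype {ι : Type*} [Fintype ι] (E : ι → Set X) (meas : ∀ i, MeasurableSet (E i))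
    (disj : Pairwise (Function.onFun Disjoint E)) (cover : ⋃ i, E i = Set.univ) :
    FinPartition X where
  m := Fintype.card ι
  E := E ∘ (Fintype.equivFin ι).symm
  meas _ := meas _
  disj := disj.comp_of_injective (Fintype.equivFin ι).symm.injective
  cover := by rw [← cover]; exact (Fintype.equivFin ι).symm.surjective.iUnion_comp E

theorem sum_ofFintype {M : Type*} [AddCommMonoid M] {ι : Type*} [Fintype ι] (E : ι → Set X)
    (meas : ∀ i, MeasurableSet (E i)) (disj : Pairwise (Function.onFun Disjoint E))
    (cover : ⋃ i, E i = Set.univ) (g : Set X → M) :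
    ∑ k, g ((ofFintype E meas disj cover).E k) = ∑ i, g (E i) :=
  (Fintype.equivFin ι).symm.sum_comp (g ∘ E)

instance : Nonempty (FinPartition X) :=
  ⟨ofFintype (fun _ : Unit => Set.univ) (fun _ => .univ) Subsingleton.pairwise
    (Set.iUnion_const _)⟩

theorem sum_setLIntegral (π : FinPartition X) (μ : Measure X) (g : X → ℝ≥0∞) :
    ∑ k, ∫⁻ x in π.E k, g x ∂μ = ∫⁻ x, g x ∂μ := by
  rw [← tsum_fintype (L := SummationFilter.unconditional _), ← lintegral_iUnion π.meas π.disj,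
    π.cover, Measure.restrict_univ]

end FinPartition

namespace MeasureTheory.SimpleFunc

variable {X : Type*} [MeasurableSpace X]

noncomputable def fiberPartition {β : Type*} (s : SimpleFunc X β) : FinPartition X :=
  .ofFintype (fun c : s.range => s ⁻¹' {(c : β)}) (fun _ => s.measurableSet_fiber _)
    ((pairwise_disjoint_fiber s).comp_of_injective Subtype.val_injective)
    (Set.eq_univ_of_forall fun x => Set.mem_iUnion.2 ⟨⟨s x, s.mem_range_self x⟩, rfl⟩)

theorem lintegral_le_sum_fiberPartition (s : SimpleFunc X ℝ≥0∞) (μ : Measure X)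
    {g : Set X → ℝ≥0∞} (hg : ∀ c, c * μ (s ⁻¹' {c}) ≤ g (s ⁻¹' {c})) :
    s.lintegral μ ≤ ∑ k, g (s.fiberPartition.E k) := by
  rw [fiberPartition, FinPartition.sum_ofFintype, SimpleFunc.lintegral,
    ← Finset.sum_coe_sort]
  exact Finset.sum_le_sum fun c _ => hg c

end MeasureTheory.SimpleFunc

section Holder

variable {X : Type*} [MeasurableSpace X] {μ : Measure X} {f : X → ℝ≥0∞} {q : ℝ}

theorem lintegral_rpow_le_mul_measure_univ_rpow (hf : AEMeasurable f μ) (hq : 1 < q) :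
    (∫⁻ x, f x ∂μ) ^ q ≤ (∫⁻ x, f x ^ q ∂μ) * μ Set.univ ^ (q - 1) := by
  have hq0 : 0 < q := zero_lt_one.trans hq
  have holder := ENNReal.lintegral_mul_le_Lp_mul_Lq μ (Real.HolderConjugate.conjExponent hq) hf
    (aemeasurable_const (b := 1))
  simp only [Pi.mul_apply, mul_one, one_rpow, lintegral_const, one_mul] at holder
  calc (∫⁻ x, f x ∂μ) ^ q
      ≤ ((∫⁻ x, f x ^ q ∂μ) ^ (1 / q) * μ Set.univ ^ (1 / (q / (q - 1)))) ^ q :=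
        rpow_le_rpow holder hq0.le
    _ = (∫⁻ x, f x ^ q ∂μ) * μ Set.univ ^ (q - 1) := by
        rw [mul_rpow_of_nonneg _ _ hq0.le, ← rpow_mul, ← rpow_mul, one_div_mul_cancel hq0.ne',
          rpow_one]
        congr 2
        field_simp

theorem lintegral_rpow_div_measure_univ_rpow_le (hf : AEMeasurable f μ) (hq : 1 < q) :
    (∫⁻ x, f x ∂μ) ^ q / μ Set.univ ^ (q - 1) ≤ ∫⁻ x, f x ^ q ∂μ :=
  div_le_of_le_mul (lintegral_rpow_le_mul_measure_univ_rpow hf hq)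

theorem mul_measure_le_setLIntegral_rpow_div {E : Set X} (hE : MeasurableSet E) (hμE : μ E ≠ ∞)
    (hq : 1 < q) {c : ℝ≥0∞} (hc : ∀ x ∈ E, c ≤ f x ^ q) :
    c * μ E ≤ (∫⁻ x in E, f x ∂μ) ^ q / μ E ^ (q - 1) := by
  have hq0 : 0 < q := zero_lt_one.trans hq
  rcases eq_or_ne (μ E) 0 with hμE0 | hμE0
  · simp [hμE0]
  have hμE_mul : μ E * μ E ^ (q - 1) = μ E ^ q := by
    simpa using (rpow_add_of_nonneg (x := μ E) 1 (q - 1) zero_le_one (by linarith)).symm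
  have hroot : c ^ q⁻¹ * μ E ≤ ∫⁻ x in E, f x ∂μ := by
    rw [← setLIntegral_const]
    refine setLIntegral_mono' hE fun x hx => ?_
    simpa [← rpow_mul, hq0.ne'] using rpow_le_rpow (hc x hx) (inv_nonneg.2 hq0.le)
  rw [ENNReal.le_div_iff_mul_le (.inl (by simp [hμE0, hμE])) (.inl (by simp [hμE0, hμE])),
    mul_assoc, hμE_mul]
  calc c * μ E ^ q = (c ^ q⁻¹ * μ E) ^ q := by
        rw [mul_rpow_of_nonneg _ _ hq0.le, ← rpow_mul, inv_mul_cancel₀ hq0.ne', rpow_one]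
    _ ≤ (∫⁻ x in E, f x ∂μ) ^ q := rpow_le_rpow hroot hq0.le

end Holder

theorem lintegral_rpow_eq_iSup_finPartition {X : Type*} [MeasurableSpace X] {μ : Measure X}
    [IsFiniteMeasure μ] {f : X → ℝ≥0∞} (hf : AEMeasurable f μ) {q : ℝ} (hq : 1 < q) :
    ∫⁻ x, f x ^ q ∂μ =
      ⨆ π : FinPartition X, ∑ k, (∫⁻ x in π.E k, f x ∂μ) ^ q / μ (π.E k) ^ (q - 1) := by
  refine le_antisymm ?_ (iSup_le fun π => ?_)
  · rw [lintegral_def]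
    refine iSup₂_le fun s hs => le_iSup_of_le s.fiberPartition ?_
    refine s.lintegral_le_sum_fiberPartition μ
      (g := fun E => (∫⁻ x in E, f x ∂μ) ^ q / μ E ^ (q - 1)) fun c => ?_
    exact mul_measure_le_setLIntegral_rpow_div (s.measurableSet_fiber c) (measure_ne_top μ _) hq
      fun x (hx : s x = c) => hx ▸ hs x
  · calc ∑ k, (∫⁻ x in π.E k, f x ∂μ) ^ q / μ (π.E k) ^ (q - 1)
        ≤ ∑ k, ∫⁻ x in π.E k, f x ^ q ∂μ := Finset.sum_le_sum fun k _ => by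
          simpa using
            lintegral_rpow_div_measure_univ_rpow_le hf.restrict hq (μ := μ.restrict (π.E k))
      _ = ∫⁻ x, f x ^ q ∂μ := π.sum_setLIntegral μ _

namespace EReal

theorem continuous_const_mul (c : ℝ) : Continuous fun x : EReal => (c : EReal) * x :=
  continuous_iff_continuousAt.2 fun _ =>
    EReal.Tendsto.const_mul tendsto_id (.inl (coe_ne_bot c)) (.inl (coe_ne_top c))

theorem continuous_sub_coe (r : ℝ) : Continuous fun x : EReal => x - r :=
  continuous_iff_continuousAt.2 fun x =>
    (continuousAt_add (p := (x, -r)) (.inr (by simp)) (.inr (by simp))).comp₂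
      continuousAt_id continuousAt_const

end EReal

theorem gyp_tsallis {X : Type*} [MeasurableSpace X]
    (P R : Measure X) [IsProbabilityMeasure P] [IsProbabilityMeasure R]
    (h : P ≪ R) (q : ℝ) (hq : 1 < q) :
    ((1 / (q - 1) : ℝ) : EReal) *
        (((lintegral R (fun x => P.rnDeriv R x ^ q) : ℝ≥0∞) : EReal) - 1)
      = ⨆ π : FinPartition X, ((1 / (q - 1) : ℝ) : EReal) *
          (((∑ k, P (π.E k) ^ q / R (π.E k) ^ (q - 1) : ℝ≥0∞) : EReal) - 1) := by
  have hc : (0 : ℝ) ≤ 1 / (q - 1) := one_div_nonneg.2 (by linarith)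
  have hcont : Continuous fun a : ℝ≥0∞ => ((1 / (q - 1) : ℝ) : EReal) * ((a : EReal) - 1) :=
    (EReal.continuous_const_mul _).comp
      ((EReal.continuous_sub_coe 1).comp continuous_coe_ennreal_ereal)
  have hmono : Monotone fun a : ℝ≥0∞ => ((1 / (q - 1) : ℝ) : EReal) * ((a : EReal) - 1) :=
    fun a b hab => mul_le_mul_of_nonneg_left
      (EReal.sub_le_sub (EReal.coe_ennreal_le_coe_ennreal_iff.2 hab) le_rfl) (by exact_mod_cast hc)
  rw [lintegral_rpow_eq_iSup_finPartition (Measure.measurable_rnDeriv P R).aemeasurable hq]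
  simp_rw [Measure.setLIntegral_rnDeriv h]
  exact hmono.map_ciSup_of_continuousAt hcont.continuousAt
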